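/- For every continuous V : 𝕋^d → ℝ, every u ∈ L² and every t ∈ ℝ, one has ‖F(Φ_t(u)) − F(u)‖_{L²} ≤ 3 |t| ‖V‖²_∞ ‖u‖⁵_{L²}, where F(u) = (V⋆|u|²)·u and Φ_t(u) = exp(−i t (V⋆|u|²))·u. -/

import Mathlib

open MeasureTheory Complex Real

noncomputable section

instance fact2pi : Fact (0 < 2 * Real.pi) := ⟨by positivity⟩

abbrev Torus (d : ℕ) := Fin d → AddCircle (2 * Real.pi)

abbrev L2T (d : ℕ) := Lp ℂ 2 (volume : Measure (Torus d))

/-- The convolution `V ⋆ |u|²`. -/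
def Vconv {d : ℕ} (V : C(Torus d, ℝ)) (u : L2T d) : Torus d → ℝ :=
  fun x => ∫ y, V (x - y) * ‖(u : Torus d → ℂ) y‖ ^ 2

/-- The nonlinearity `F(u) = (V ⋆ |u|²) · u` as a function. -/
def FFun {d : ℕ} (V : C(Torus d, ℝ)) (u : L2T d) : Torus d → ℂ :=
  fun x => (Vconv V u x : ℂ) * (u : Torus d → ℂ) x

/-- The flow `Φ_t(u) = exp(-i t (V ⋆ |u|²)) · u` as a function. -/
def PhiFun {d : ℕ} (V : C(Torus d, ℝ)) (t : ℝ) (u : L2T d) : Torus d → ℂ :=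
  fun x => Complex.exp (-(Complex.I * t * (Vconv V u x))) * (u : Torus d → ℂ) x

open Classical in
/-- `F(u)` as an element of `L²`. -/
def FL {d : ℕ} (V : C(Torus d, ℝ)) (u : L2T d) : L2T d :=
  if h : MemLp (FFun V u) 2 volume then h.toLp _ else 0

open Classical in
/-- `Φ_t(u)` as an element of `L²`. -/
def PhiL {d : ℕ} (V : C(Torus d, ℝ)) (t : ℝ) (u : L2T d) : L2T d :=
  if h : MemLp (PhiFun V t u) 2 volume then h.toLp _ else 0

/-! The phase `exp (-i t V[u])` has modulus one, so `|Φ_t(u)| = |u|` pointwise and hence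
`V[Φ_t(u)] = V[u] =: W`. Therefore `F(Φ_t(u)) - F(u) = W (exp (-i t W) - 1) u`, and the bounds
`|W| ≤ ‖V‖_∞ ‖u‖²` and `|exp (i θ) - 1| ≤ |θ|` give the estimate even with constant `1`. -/

theorem MeasureTheory.Lp.integral_norm_sq_eq {α E : Type*} [MeasurableSpace α] {μ : Measure α}
    [NormedAddCommGroup E] (u : Lp E 2 μ) : ∫ x, ‖u x‖ ^ 2 ∂μ = ‖u‖ ^ 2 := by
  have h := (Lp.memLp u).eLpNorm_eq_integral_rpow_norm two_ne_zero ENNReal.ofNat_ne_top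
  rw [Lp.norm_def, h, ENNReal.toReal_ofReal (by positivity)]
  simp only [ENNReal.toReal_ofNat, Real.rpow_two]
  rw [← Real.rpow_natCast, ← Real.rpow_mul (integral_nonneg fun x => by positivity)]
  norm_num

theorem Complex.norm_exp_neg_I_mul_sub_one_le (θ : ℝ) : ‖exp (-(I * θ)) - 1‖ ≤ |θ| := by
  simpa [ofReal_neg, mul_neg] using norm_exp_I_mul_ofReal_sub_one_le (x := -θ)

theorem norm_ofReal_mul_exp_sub_le (t w : ℝ) (z : ℂ) :
    ‖(w : ℂ) * (exp (-(I * t * w)) * z) - w * z‖ ≤ |t| * w ^ 2 * ‖z‖ := by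
  have hphase : ‖exp (-(I * t * w)) - 1‖ ≤ |t * w| := by
    simpa [mul_assoc] using norm_exp_neg_I_mul_sub_one_le (t * w)
  calc ‖(w : ℂ) * (exp (-(I * t * w)) * z) - w * z‖
      = |w| * ‖exp (-(I * t * w)) - 1‖ * ‖z‖ := by
        rw [← mul_sub, ← sub_one_mul, norm_mul, norm_mul, norm_real, Real.norm_eq_abs]; ring
    _ ≤ |w| * |t * w| * ‖z‖ := by gcongr
    _ = |t| * w ^ 2 * ‖z‖ := by rw [abs_mul, ← sq_abs w]; ring

section Torus

variable {d : ℕ} (V : C(Torus d, ℝ))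

theorem abs_vconv_le (u : L2T d) (x : Torus d) : |Vconv V u x| ≤ ‖V‖ * ‖u‖ ^ 2 := by
  calc |Vconv V u x| ≤ ∫ y, ‖V‖ * ‖(u : Torus d → ℂ) y‖ ^ 2 := by
        rw [← Real.norm_eq_abs, Vconv]
        refine norm_integral_le_of_norm_le ((Lp.memLp u).norm.integrable_sq.const_mul _)
          (.of_forall fun y => ?_)
        rw [norm_mul, norm_pow, norm_norm]
        gcongr
        exact V.norm_coe_le_norm _
    _ = ‖V‖ * ‖u‖ ^ 2 := by rw [integral_const_mul, Lp.integral_norm_sq_eq]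

theorem aestronglyMeasurable_vconv (u : L2T d) : AEStronglyMeasurable (Vconv V u) volume := by
  refine AEStronglyMeasurable.integral_prod_right' (f := fun p : Torus d × Torus d =>
    V (p.1 - p.2) * ‖(u : Torus d → ℂ) p.2‖ ^ 2) ?_
  exact (V.continuous.comp (continuous_fst.sub continuous_snd)).aestronglyMeasurable.mul
    ((Lp.aestronglyMeasurable u).norm.pow 2).comp_snd

theorem vconv_congr {u v : L2T d}
    (h : ∀ᵐ y, ‖(u : Torus d → ℂ) y‖ = ‖(v : Torus d → ℂ) y‖) : Vconv V u = Vconv V v :=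
  funext fun _ => integral_congr_ae (h.mono fun y hy => by simp only [hy])

theorem memLp_fFun (u : L2T d) : MemLp (FFun V u) 2 volume := by
  refine MemLp.of_le_mul (c := ‖V‖ * ‖u‖ ^ 2) (Lp.memLp u) ?_ (.of_forall fun x => ?_)
  · exact (continuous_ofReal.comp_aestronglyMeasurable (aestronglyMeasurable_vconv V u)).mul
      (Lp.aestronglyMeasurable u)
  · rw [FFun, norm_mul, norm_real, Real.norm_eq_abs]
    gcongr
    exact abs_vconv_le V u x

theorem norm_phiFun (t : ℝ) (u : L2T d) (x : Torus d) :
    ‖PhiFun V t u x‖ = ‖(u : Torus d → ℂ) x‖ := by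
  rw [PhiFun, norm_mul, norm_exp]
  simp

theorem memLp_phiFun (t : ℝ) (u : L2T d) : MemLp (PhiFun V t u) 2 volume := by
  refine (Lp.memLp u).of_le ?_ (.of_forall fun x => (norm_phiFun V t u x).le)
  refine (Complex.continuous_exp.comp_aestronglyMeasurable ?_).mul (Lp.aestronglyMeasurable u)
  exact ((continuous_ofReal.comp_aestronglyMeasurable
    (aestronglyMeasurable_vconv V u)).const_mul _).neg

theorem coeFn_fL (u : L2T d) : (FL V u : Torus d → ℂ) =ᵐ[volume] FFun V u := by
  rw [FL, dif_pos (memLp_fFun V u)]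
  exact (memLp_fFun V u).coeFn_toLp

theorem coeFn_phiL (t : ℝ) (u : L2T d) : (PhiL V t u : Torus d → ℂ) =ᵐ[volume] PhiFun V t u := by
  rw [PhiL, dif_pos (memLp_phiFun V t u)]
  exact (memLp_phiFun V t u).coeFn_toLp

theorem vconv_phiL (t : ℝ) (u : L2T d) : Vconv V (PhiL V t u) = Vconv V u :=
  vconv_congr V ((coeFn_phiL V t u).mono fun y hy => by rw [hy, norm_phiFun])

theorem ae_norm_fL_phiL_sub_fL_le (t : ℝ) (u : L2T d) :
    ∀ᵐ x, ‖(FL V (PhiL V t u) - FL V u : L2T d) x‖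
      ≤ |t| * ‖V‖ ^ 2 * ‖u‖ ^ 4 * ‖(u : Torus d → ℂ) x‖ := by
  filter_upwards [Lp.coeFn_sub (FL V (PhiL V t u)) (FL V u), coeFn_fL V u,
    coeFn_fL V (PhiL V t u), coeFn_phiL V t u] with x hsub hFu hFΦ hΦ
  rw [hsub, Pi.sub_apply, hFu, hFΦ, FFun, FFun, vconv_phiL, hΦ, PhiFun]
  have hW : Vconv V u x ^ 2 ≤ (‖V‖ * ‖u‖ ^ 2) ^ 2 :=
    sq_le_sq' (abs_le.mp (abs_vconv_le V u x)).1 (abs_le.mp (abs_vconv_le V u x)).2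
  calc _ ≤ |t| * Vconv V u x ^ 2 * ‖(u : Torus d → ℂ) x‖ := norm_ofReal_mul_exp_sub_le _ _ _
    _ ≤ |t| * (‖V‖ * ‖u‖ ^ 2) ^ 2 * ‖(u : Torus d → ℂ) x‖ := by gcongr
    _ = |t| * ‖V‖ ^ 2 * ‖u‖ ^ 4 * ‖(u : Torus d → ℂ) x‖ := by ring

theorem norm_fL_phiL_sub_fL_le (t : ℝ) (u : L2T d) :
    ‖FL V (PhiL V t u) - FL V u‖ ≤ |t| * ‖V‖ ^ 2 * ‖u‖ ^ 5 := by
  calc _ ≤ |t| * ‖V‖ ^ 2 * ‖u‖ ^ 4 * ‖u‖ :=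
        Lp.norm_le_mul_norm_of_ae_le_mul (ae_norm_fL_phiL_sub_fL_le V t u)
    _ = |t| * ‖V‖ ^ 2 * ‖u‖ ^ 5 := by ring

end Torus

theorem stmt8_general (d : ℕ) (V : C(Torus d, ℝ)) (u : L2T d) (t : ℝ) :
    ‖FL V (PhiL V t u) - FL V u‖ ≤ 3 * |t| * ‖V‖ ^ 2 * ‖u‖ ^ 5 :=
  (norm_fL_phiL_sub_fL_le V t u).trans (by gcongr; linarith [abs_nonneg t])

/-- `‖F(Φ_t(u)) − F(u)‖_{L²} ≤ 3 |t| ‖V‖²_∞ ‖u‖⁵_{L²}` for the nonlocal interaction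
nonlinearity `F(u) = (V⋆|u|²)·u` and its flow `Φ_t(u) = exp(−i t (V⋆|u|²))·u`. -/
theorem stmt8 (d : ℕ) (hd : 1 ≤ d) (V : C(Torus d, ℝ)) (u : L2T d) (t : ℝ) :
    ‖FL V (PhiL V t u) - FL V u‖ ≤ 3 * |t| * ‖V‖ ^ 2 * ‖u‖ ^ 5 :=
  stmt8_general d V u t
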